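/- arXiv:2405.18313 — 4 statements merged into one kernel-verified Lean document; each statement's English description precedes it below -/
import Mathlib

section
/- Let k be an algebraically closed field of characteristic 0, V a finite-dimensional k-vector space, and s an endomorphism of V. Then there exists a nondegenerate symmetric bilinear form B on V such that s is self-adjoint with respect to B, i.e., B(s v, w) = B(v, s w) for all v, w in V. -/
/-!
`V` viewed as a `k[X]`-module through `s` is a finite direct sum of cyclic modules `k[X] ⧸ (q)`
with `q` monic, on which `s` acts as multiplication by `X`. A commutative
algebra `A` carries the symmetric form `(a, b) ↦ l (a * b)` for any `l : A → k`, and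
multiplication by every element of `A` is self-adjoint for it. On `k[X] ⧸ (q)` the functional
"coefficient of `X ^ (deg q - 1)` of the reduced representative" makes this form nondegenerate:
a nonzero remainder `F` times `X ^ (deg q - 1 - deg F)` has that coefficient equal to the
leading coefficient of `F`. Orthogonal sums and transport along the decomposition finish.
-/

open Polynomial
open LinearMap (BilinForm IsAdjointPair)

namespace Module.End

variable {R M N : Type*} [CommRing R] [AddCommGroup M] [Module R M] [AddCommGroup N] [Module R N]

def AdmitsSelfAdjointForm (s : End R M) : Prop :=
  ∃ B : BilinForm R M, B.Nondegenerate ∧ B.IsSymm ∧ IsAdjointPair B B s s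

theorem AdmitsSelfAdjointForm.of_semiconj {s : End R M} {t : End R N} (e : M ≃ₗ[R] N)
    (he : Function.Semiconj e s t) (ht : AdmitsSelfAdjointForm t) :
    AdmitsSelfAdjointForm s := by
  obtain ⟨B, hB, hsymm, hadj⟩ := ht
  refine ⟨BilinForm.congr e.symm B, hB.congr e.symm, ⟨fun v w => hsymm.eq (e v) (e w)⟩,
    fun v w => ?_⟩
  simpa [he v, he w] using hadj (e v) (e w)

theorem AdmitsSelfAdjointForm.piMap {ι : Type*} [Fintype ι] {M : ι → Type*}
    [∀ i, AddCommGroup (M i)] [∀ i, Module R (M i)] {t : ∀ i, End R (M i)}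
    (ht : ∀ i, AdmitsSelfAdjointForm (t i)) : AdmitsSelfAdjointForm (LinearMap.piMap t) := by
  classical
  choose B hB hsymm hadj using ht
  let B' : BilinForm R (∀ i, M i) := ∑ i, (B i).compl₁₂ (LinearMap.proj i) (LinearMap.proj i)
  have hB' (v w : ∀ i, M i) : B' v w = ∑ i, B i (v i) (w i) := by simp [B', LinearMap.sum_apply]
  have hsymm' : B'.IsSymm := ⟨fun v w => by simp only [hB', (hsymm _).eq (v _)]⟩
  refine ⟨B', hsymm'.isRefl.nondegenerate_iff_separatingLeft.mpr fun v hv => ?_, hsymm',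
    fun v w => by simp only [hB', LinearMap.coe_piMap, Pi.map_apply, hadj _ (v _)]⟩
  ext i
  refine (hB i).1 _ fun w => ?_
  have := hv (Pi.single i w)
  rwa [hB', Finset.sum_eq_single i (fun j _ hj => by simp [hj]) (by simp),
    Pi.single_eq_same] at this

theorem admitsSelfAdjointForm_mulLeft {A : Type*} [CommRing A] [Algebra R A] (l : A →ₗ[R] R)
    (hl : ∀ x : A, (∀ y, l (x * y) = 0) → x = 0) (a : A) :
    AdmitsSelfAdjointForm (LinearMap.mulLeft R a) := by
  let B : BilinForm R A := (LinearMap.mul R A).compr₂ l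
  have hsymm : B.IsSymm := ⟨fun x y => by simp [B, mul_comm]⟩
  exact ⟨B, hsymm.isRefl.nondegenerate_iff_separatingLeft.mpr hl, hsymm,
    fun x y => by simp [B, mul_assoc, mul_left_comm]⟩

end Module.End

namespace AdjoinRoot

variable {R : Type*} [CommRing R] {q : R[X]}

theorem eq_zero_of_forall_coeff_modByMonicHom_mul (hq : q.Monic) {x : AdjoinRoot q}
    (hx : ∀ y, (modByMonicHom hq (x * y)).coeff (q.natDegree - 1) = 0) : x = 0 := by
  obtain ⟨f, rfl⟩ := mk_surjective x
  rw [← mk_leftInverse hq (mk q f), modByMonicHom_mk] at hx ⊢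
  set F := f %ₘ q
  by_contra hF
  have hF0 : F ≠ 0 := by rintro h; simp [h] at hF
  have : Nontrivial R := ⟨⟨F.leadingCoeff, 0, leadingCoeff_ne_zero.mpr hF0⟩⟩
  have hdeg : F.natDegree < q.natDegree := natDegree_lt_natDegree hF0 (degree_modByMonic_lt f hq)
  set j := q.natDegree - 1 - F.natDegree
  have hG : (F * X ^ j).natDegree = q.natDegree - 1 := by rw [natDegree_mul_X_pow _ hF0]; omega
  have hGq : F * X ^ j %ₘ q = F * X ^ j :=
    (modByMonic_eq_self_iff hq).mpr (degree_lt_degree (by omega))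
  have := hx (mk q (X ^ j))
  rw [← map_mul, modByMonicHom_mk, hGq, ← hG, ← leadingCoeff, leadingCoeff_mul_X_pow] at this
  exact hF0 (leadingCoeff_eq_zero.mp this)

theorem admitsSelfAdjointForm_mulLeft (hq : q.Monic) (a : AdjoinRoot q) :
    Module.End.AdmitsSelfAdjointForm (LinearMap.mulLeft R a) :=
  Module.End.admitsSelfAdjointForm_mulLeft ((lcoeff R (q.natDegree - 1)).comp (modByMonicHom hq))
    (fun _ hx => eq_zero_of_forall_coeff_modByMonicHom_mul hq hx) a

end AdjoinRoot

namespace Module.End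

universe u v

variable {k : Type u} {V : Type v} [Field k] [AddCommGroup V] [Module k V] [FiniteDimensional k V]

theorem exists_semiconj_piMap_mulLeft_root (s : End k V) :
    ∃ (ι : Type u) (_ : Fintype ι) (q : ι → k[X]) (_ : ∀ i, (q i).Monic)
      (e : V ≃ₗ[k] ∀ i, AdjoinRoot (q i)),
      Function.Semiconj e s
        (LinearMap.piMap fun i => LinearMap.mulLeft k (AdjoinRoot.root (q i))) := by
  classical
  obtain ⟨ι, _, p, hp, n, ⟨E⟩⟩ := Module.equiv_directSum_of_isTorsion
    (Module.AEval.isTorsion_of_finiteDimensional k V s)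
  have hspan i : (k[X] ∙ p i ^ n i) = Ideal.span {normalize (p i ^ n i)} :=
    Ideal.span_singleton_eq_span_singleton.mpr (associated_normalize _)
  let E' : AEval' s ≃ₗ[k[X]] ∀ i, k[X] ⧸ Ideal.span {normalize (p i ^ n i)} :=
    E ≪≫ₗ DFinsupp.mapRange.linearEquiv (fun i => Submodule.quotEquivOfEq _ _ (hspan i)) ≪≫ₗ
      DirectSum.linearEquivFunOnFintype k[X] ι _
  refine ⟨ι, inferInstance, _, fun i => monic_normalize (pow_ne_zero _ (hp i).ne_zero),
    (AEval'.of s).trans (E'.restrictScalars k), fun v => funext fun i => ?_⟩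
  change E' (AEval'.of s (s v)) i = _
  rw [← AEval'.X_smul_of, map_smul, Pi.smul_apply]
  exact Algebra.smul_def (R := k[X]) (A := k[X] ⧸ Ideal.span {normalize (p i ^ n i)}) _ _

theorem admitsSelfAdjointForm (s : End k V) : AdmitsSelfAdjointForm s := by
  obtain ⟨ι, _, q, hq, e, he⟩ := exists_semiconj_piMap_mulLeft_root s
  exact .of_semiconj e he (.piMap fun i => AdjoinRoot.admitsSelfAdjointForm_mulLeft (hq i) _)

end Module.End

theorem exists_nondegenerate_symm_bilin_selfadjoint_general
    {k V : Type*} [Field k]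
    [AddCommGroup V] [Module k V] [FiniteDimensional k V]
    (s : V →ₗ[k] V) :
    ∃ B : LinearMap.BilinForm k V,
      B.Nondegenerate ∧ (∀ v w : V, B v w = B w v) ∧
      (∀ v w : V, B (s v) w = B v (s w)) := by
  obtain ⟨B, hB, hsymm, hadj⟩ := Module.End.admitsSelfAdjointForm s
  exact ⟨B, hB, hsymm.eq, hadj⟩

/-- Let `k` be an algebraically closed field of characteristic 0, `V` a finite-dimensional
`k`-vector space and `s` an endomorphism of `V`.  Then there exists a nondegenerate symmetric
bilinear form `B` on `V` such that `s` is self-adjoint with respect to `B`. -/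
theorem exists_nondegenerate_symm_bilin_selfadjoint
    {k V : Type*} [Field k] [IsAlgClosed k] [CharZero k]
    [AddCommGroup V] [Module k V] [FiniteDimensional k V]
    (s : V →ₗ[k] V) :
    ∃ B : LinearMap.BilinForm k V,
      B.Nondegenerate ∧ (∀ v w : V, B v w = B w v) ∧
      (∀ v w : V, B (s v) w = B v (s w)) :=
  exists_nondegenerate_symm_bilin_selfadjoint_general s
end

section
/- Every square matrix over an algebraically closed field of characteristic 0 is conjugate (similar) to a symmetric matrix. -/
/-!
A matrix is similar to a symmetric one as soon as it is self-adjoint for a nondegenerate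
symmetric bilinear form `B`: over an algebraically closed field of characteristic `≠ 2`, `B` has
an orthonormal basis, so its Gram matrix is `Pᵀ P` with `P` invertible, and then `P s P⁻¹` is
symmetric.

Such a form is glued together along invariant direct sum decompositions. The Fitting
decomposition of `f - μ` for an eigenvalue `μ` reduces to nilpotent `f`. If `f` has nilpotency
class `d`, pick `v` and a functional `φ` with `φ (f^(d-1) v) ≠ 0`; then the cyclic space spanned
by the `f^i v` is complementary to the invariant space `{x | ∀ j, φ (f^j x) = 0}`, and on the
cyclic space `B (p(f) v, q(f) v) = φ ((p q)(f) v)` is symmetric, nondegenerate and makes `f`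
self-adjoint.
-/

open Module Polynomial Set Matrix

namespace Module.End

variable {k : Type*} [Field k] {V V' : Type*} [AddCommGroup V] [Module k V]
  [AddCommGroup V'] [Module k V']

def IsSymmetrizable (f : Module.End k V) : Prop :=
  ∃ B : LinearMap.BilinForm k V, B.IsSymm ∧ B.Nondegenerate ∧ LinearMap.IsSelfAdjoint B f

theorem isSymmetrizable_of_subsingleton [Subsingleton V] (f : Module.End k V) :
    IsSymmetrizable f :=
  ⟨0, LinearMap.BilinForm.isSymm_zero, ⟨fun _ _ ↦ Subsingleton.elim _ _,
    fun _ _ ↦ Subsingleton.elim _ _⟩, fun _ _ ↦ rfl⟩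

namespace IsSymmetrizable

variable {f : Module.End k V}

theorem add_smul_one (hf : IsSymmetrizable f) (c : k) : IsSymmetrizable (f + c • 1) := by
  obtain ⟨B, hBs, hBn, hBf⟩ := hf
  exact ⟨B, hBs, hBn, hBf.add (LinearMap.isAdjointPair_one.smul c)⟩

theorem conj (hf : IsSymmetrizable f) (e : V ≃ₗ[k] V') : IsSymmetrizable (e.conj f) := by
  obtain ⟨B, hBs, hBn, hBf⟩ := hf
  refine ⟨LinearMap.BilinForm.congr e B, ⟨fun x y ↦ hBs.eq _ _⟩, hBn.congr e,
    fun x y ↦ ?_⟩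
  simpa [LinearMap.BilinForm.congr_apply, LinearEquiv.conj_apply] using hBf (e.symm x) (e.symm y)

theorem prodMap {g : Module.End k V'} (hf : IsSymmetrizable f) (hg : IsSymmetrizable g) :
    IsSymmetrizable (f.prodMap g) := by
  obtain ⟨B, hBs, hBn, hBf⟩ := hf
  obtain ⟨C, hCs, hCn, hCg⟩ := hg
  let D : LinearMap.BilinForm k (V × V') :=
    B.compl₁₂ (LinearMap.fst k V V') (LinearMap.fst k V V') +
      C.compl₁₂ (LinearMap.snd k V V') (LinearMap.snd k V V')
  have hD : D.IsSymm := ⟨fun x y ↦ by simp [D, hBs.eq x.1, hCs.eq x.2]⟩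
  refine ⟨D, hD, (LinearMap.IsRefl.nondegenerate_iff_separatingLeft hD.isRefl).mpr
    fun x hx ↦ Prod.ext ?_ ?_, fun x y ↦ by simp [D, hBf x.1 y.1, hCg x.2 y.2]⟩
  · exact hBn.1 _ fun u ↦ by simpa [D] using hx (u, 0)
  · exact hCn.1 _ fun u ↦ by simpa [D] using hx (0, u)

theorem of_isCompl {p q : Submodule k V} (h : IsCompl p q) (hp : ∀ x ∈ p, f x ∈ p)
    (hq : ∀ x ∈ q, f x ∈ q) (hfp : IsSymmetrizable (f.restrict hp))
    (hfq : IsSymmetrizable (f.restrict hq)) : IsSymmetrizable f := by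
  have : f = (p.prodEquivOfIsCompl q h).conj ((f.restrict hp).prodMap (f.restrict hq)) := by
    refine LinearMap.ext fun x ↦ ?_
    obtain ⟨y, rfl⟩ := (p.prodEquivOfIsCompl q h).surjective x
    simp [LinearEquiv.conj_apply]
  rw [this]
  exact (hfp.prodMap hfq).conj _

end IsSymmetrizable

theorem aeval_apply_aeval_apply_comm (f : Module.End k V) (p q : k[X]) (x : V) :
    aeval f p (aeval f q x) = aeval f q (aeval f p x) := by
  rw [← mul_apply, ← map_mul, mul_comm, map_mul, mul_apply]

theorem isSymmetrizable_restrict_of_basis {f : Module.End k V} {U : Submodule k V}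
    (hU : ∀ x ∈ U, f x ∈ U) {ι : Type*} (b : Basis ι k U) (v : V) (P : ι → k[X])
    (hb : ∀ i, (b i : V) = aeval f (P i) v) (φ : Module.Dual k V)
    (hsep : ∀ x ∈ U, (∀ i, φ (aeval f (P i) x) = 0) → x = 0) :
    IsSymmetrizable (f.restrict hU) := by
  set L : U →ₗ[k] k[X] := b.constr k P
  have hL : ∀ x : U, aeval f (L x) v = x := by
    have : (LinearMap.applyₗ v ∘ₗ (aeval f).toLinearMap ∘ₗ L) = U.subtype :=
      b.ext fun i ↦ by simp [L, hb]
    exact fun x ↦ LinearMap.congr_fun this x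
  have hcomm : ∀ x y : U, aeval f (L x) (y : V) = aeval f (L y) x := fun x y ↦ by
    rw [← hL x, ← hL y, aeval_apply_aeval_apply_comm]
  have h_aeval : ∀ (p : k[X]) (x : U), aeval f p (f.restrict hU x : V) = f (aeval f p x) :=
    fun p x ↦ by simpa using aeval_apply_aeval_apply_comm f p X (x : V)
  let B : LinearMap.BilinForm k U :=
    LinearMap.mk₂ k (fun x y ↦ φ (aeval f (L x) y)) (by simp) (by simp) (by simp) (by simp)
  have hB : ∀ x y, B x y = φ (aeval f (L x) y) := fun _ _ ↦ rfl
  have hBs : B.IsSymm := ⟨fun x y ↦ by rw [hB, hB, hcomm]⟩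
  refine ⟨B, hBs, ?_, fun x y ↦ ?_⟩
  · refine (LinearMap.IsRefl.nondegenerate_iff_separatingLeft hBs.isRefl).mpr fun x hx ↦ ?_
    refine Subtype.ext (hsep x x.2 fun i ↦ ?_)
    rw [← hx (b i), hB, hcomm, b.constr_basis]
  · rw [hB, hB, hcomm _ y, h_aeval, h_aeval, hcomm x]

section Nilpotent

variable {f : Module.End k V} {d : ℕ} {v : V} {φ : Module.Dual k V}

theorem pow_sub_apply_sum_pow_apply (hd : f ^ d = 0) {c : Fin d → k} {i : Fin d}
    (hc : ∀ j < i, c j = 0) :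
    (f ^ (d - 1 - i)) (∑ j, c j • (f ^ (j : ℕ)) v) = c i • (f ^ (d - 1)) v := by
  simp only [map_sum, map_smul, ← mul_apply, ← pow_add]
  refine (Finset.sum_eq_single i (fun j _ hji ↦ ?_) (by simp)).trans ?_
  · rcases lt_or_gt_of_ne hji with hji | hji
    · simp [hc j hji]
    · rw [pow_eq_zero_of_le (by omega) hd, LinearMap.zero_apply, smul_zero]
  · rw [Nat.sub_add_cancel (by omega)]

theorem eq_zero_of_forall_dual_pow_apply_sum_eq_zero (hd : f ^ d = 0)
    (hφ : φ ((f ^ (d - 1)) v) ≠ 0) {c : Fin d → k}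
    (h : ∀ j : Fin d, φ ((f ^ (j : ℕ)) (∑ i, c i • (f ^ (i : ℕ)) v)) = 0) : c = 0 := by
  funext i
  induction i using WellFoundedLT.induction with
  | _ i ih =>
    have hi := h ⟨d - 1 - i, by omega⟩
    rw [pow_sub_apply_sum_pow_apply hd ih, map_smul, smul_eq_mul] at hi
    exact (mul_eq_zero.mp hi).resolve_right hφ

theorem linearIndependent_pow_apply (hd : f ^ d = 0) (hφ : φ ((f ^ (d - 1)) v) ≠ 0) :
    LinearIndependent k fun i : Fin d ↦ (f ^ (i : ℕ)) v :=
  Fintype.linearIndependent_iff.mpr fun _ hc ↦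
    congrFun (eq_zero_of_forall_dual_pow_apply_sum_eq_zero hd hφ (by simp [hc]))

theorem mem_ker_pi_dual_comp_pow_iff {x : V} :
    x ∈ LinearMap.ker (LinearMap.pi fun j : Fin d ↦ φ ∘ₗ f ^ (j : ℕ)) ↔
      ∀ j : Fin d, φ ((f ^ (j : ℕ)) x) = 0 := by
  simp [funext_iff]

theorem isCompl_span_pow_apply_ker_pi [FiniteDimensional k V] (hd : f ^ d = 0)
    (hφ : φ ((f ^ (d - 1)) v) ≠ 0) :
    IsCompl (Submodule.span k (range fun i : Fin d ↦ (f ^ (i : ℕ)) v))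
      (LinearMap.ker (LinearMap.pi fun j : Fin d ↦ φ ∘ₗ f ^ (j : ℕ))) := by
  set Φ := LinearMap.pi fun j : Fin d ↦ φ ∘ₗ f ^ (j : ℕ)
  refine (Submodule.isCompl_iff_disjoint _ _ ?_).mpr ?_
  · have h_range := (LinearMap.range Φ).finrank_le
    rw [Module.finrank_fin_fun] at h_range
    have := LinearMap.finrank_range_add_finrank_ker Φ
    rw [finrank_span_eq_card (linearIndependent_pow_apply hd hφ), Fintype.card_fin]
    omega
  · refine Submodule.disjoint_def.mpr fun x hxU hxW ↦ ?_
    obtain ⟨c, rfl⟩ := (Submodule.mem_span_range_iff_exists_fun k).mp hxU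
    simp [eq_zero_of_forall_dual_pow_apply_sum_eq_zero hd hφ
      (mem_ker_pi_dual_comp_pow_iff.mp hxW)]

theorem apply_mem_span_pow_apply (hd : f ^ d = 0) :
    ∀ x ∈ Submodule.span k (range fun i : Fin d ↦ (f ^ (i : ℕ)) v),
      f x ∈ Submodule.span k (range fun i : Fin d ↦ (f ^ (i : ℕ)) v) := by
  refine fun x hx ↦ (Submodule.map_span_le f _ _).mpr ?_ (Submodule.mem_map_of_mem hx)
  rintro _ ⟨i, rfl⟩
  rw [← mul_apply, ← pow_succ']
  by_cases hi : (i : ℕ) + 1 < d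
  · exact Submodule.subset_span ⟨⟨i + 1, hi⟩, rfl⟩
  · simp [pow_eq_zero_of_le (not_lt.mp hi) hd]

theorem apply_mem_ker_pi_dual_comp_pow (hd : f ^ d = 0) :
    ∀ x ∈ LinearMap.ker (LinearMap.pi fun j : Fin d ↦ φ ∘ₗ f ^ (j : ℕ)),
      f x ∈ LinearMap.ker (LinearMap.pi fun j : Fin d ↦ φ ∘ₗ f ^ (j : ℕ)) := by
  refine fun x hx ↦ mem_ker_pi_dual_comp_pow_iff.mpr fun j ↦ ?_
  rw [← mul_apply, ← pow_succ]
  by_cases hj : (j : ℕ) + 1 < d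
  · exact mem_ker_pi_dual_comp_pow_iff.mp hx ⟨j + 1, hj⟩
  · simp [pow_eq_zero_of_le (not_lt.mp hj) hd]

theorem exists_isCompl_isSymmetrizable_restrict_of_isNilpotent [FiniteDimensional k V]
    [Nontrivial V] (hf : IsNilpotent f) :
    ∃ (U W : Submodule k V) (hU : ∀ x ∈ U, f x ∈ U) (_ : ∀ x ∈ W, f x ∈ W),
      IsCompl U W ∧ U ≠ ⊥ ∧ IsSymmetrizable (f.restrict hU) := by
  set d := nilpotencyClass f
  have hd : f ^ d = 0 := pow_nilpotencyClass hf
  obtain ⟨v, hv⟩ : ∃ v, (f ^ (d - 1)) v ≠ 0 := by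
    by_contra! h
    exact pow_pred_nilpotencyClass hf (LinearMap.ext h)
  obtain ⟨φ, hφ⟩ : ∃ φ : Module.Dual k V, φ ((f ^ (d - 1)) v) ≠ 0 := by
    by_contra! h
    exact hv ((Module.forall_dual_apply_eq_zero_iff k _).mp h)
  have hUW := isCompl_span_pow_apply_ker_pi hd hφ
  have hU := apply_mem_span_pow_apply (v := v) hd
  refine ⟨_, _, hU, apply_mem_ker_pi_dual_comp_pow hd, hUW, ?_, ?_⟩
  · have hd_pos : 0 < d := pos_nilpotencyClass_iff.mpr hf
    exact (Submodule.ne_bot_iff _).mpr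
      ⟨_, Submodule.subset_span ⟨⟨d - 1, by omega⟩, rfl⟩, hv⟩
  · refine isSymmetrizable_restrict_of_basis hU (Basis.span (linearIndependent_pow_apply hd hφ))
      v (fun i ↦ X ^ (i : ℕ)) (fun i ↦ by rw [Basis.coe_span_apply, aeval_X_pow]) φ
      fun x hxU hxW ↦ Submodule.disjoint_def.mp hUW.disjoint x hxU ?_
    exact mem_ker_pi_dual_comp_pow_iff.mpr (by simpa using hxW)

theorem isSymmetrizable_of_isNilpotent [FiniteDimensional k V] (hf : IsNilpotent f) :
    IsSymmetrizable f := by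
  induction hn : finrank k V using Nat.strong_induction_on generalizing V with
  | _ n ih =>
    rcases subsingleton_or_nontrivial V with _ | _
    · exact isSymmetrizable_of_subsingleton f
    obtain ⟨U, W, hU, hW, hUW, hU_ne, hfU⟩ :=
      exists_isCompl_isSymmetrizable_restrict_of_isNilpotent hf
    have hlt : finrank k W < n := by
      have := Submodule.finrank_add_eq_of_isCompl hUW
      have := Submodule.one_le_finrank_iff.mpr hU_ne
      omega
    exact hfU.of_isCompl hUW hU hW (ih _ hlt (isNilpotent.restrict hW hf) rfl)

end Nilpotent

theorem isSymmetrizable_restrict_ker_pow_sub_smul_one [FiniteDimensional k V]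
    {f : Module.End k V} {μ : k} {N : ℕ}
    (hK : ∀ x ∈ LinearMap.ker ((f - μ • 1) ^ N),
      f x ∈ LinearMap.ker ((f - μ • 1) ^ N)) :
    IsSymmetrizable (f.restrict hK) := by
  set g := f - μ • 1
  have hgK : ∀ x ∈ LinearMap.ker (g ^ N), g x ∈ LinearMap.ker (g ^ N) := fun x hx ↦ by
    rw [LinearMap.mem_ker, ← mul_apply, ← pow_succ, pow_succ', mul_apply,
      LinearMap.mem_ker.mp hx, map_zero]
  have hg_nil : IsNilpotent (g.restrict hgK) := by
    refine ⟨N, LinearMap.ext fun x ↦ Subtype.ext ?_⟩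
    rw [pow_restrict, LinearMap.coe_restrict_apply]
    exact LinearMap.mem_ker.mp x.2
  have hfK : f.restrict hK = g.restrict hgK + μ • 1 := by
    ext
    simp [g]
  rw [hfK]
  exact (isSymmetrizable_of_isNilpotent hg_nil).add_smul_one μ

theorem isSymmetrizable [IsAlgClosed k] [FiniteDimensional k V] (f : Module.End k V) :
    IsSymmetrizable f := by
  induction hn : finrank k V using Nat.strong_induction_on generalizing V with
  | _ n ih =>
    rcases subsingleton_or_nontrivial V with _ | _
    · exact isSymmetrizable_of_subsingleton f
    obtain ⟨μ, hμ⟩ := f.exists_eigenvalue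
    set g := f - μ • 1
    obtain ⟨N, hN, hN_pos⟩ := (g.eventually_isCompl_ker_pow_range_pow.and
      (Filter.eventually_ge_atTop 1)).exists
    have hfg : Commute f (g ^ N) :=
      ((Commute.refl f).sub_right ((Commute.one_right f).smul_right μ)).pow_right N
    have hK : ∀ x ∈ LinearMap.ker (g ^ N), f x ∈ LinearMap.ker (g ^ N) := fun x hx ↦ by
      rw [LinearMap.mem_ker, ← mul_apply, ← hfg.eq, mul_apply, LinearMap.mem_ker.mp hx,
        map_zero]
    have hR : ∀ x ∈ LinearMap.range (g ^ N), f x ∈ LinearMap.range (g ^ N) := by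
      rintro _ ⟨y, rfl⟩
      exact ⟨f y, by rw [← mul_apply, ← hfg.eq, mul_apply]⟩
    have hK_ne : LinearMap.ker (g ^ N) ≠ ⊥ := by
      refine ne_bot_of_le_ne_bot (hasEigenvalue_iff.mp hμ) ?_
      rw [eigenspace_def, ← Nat.sub_add_cancel hN_pos, pow_succ, mul_eq_comp]
      exact LinearMap.ker_le_ker_comp _ _
    have hlt : finrank k (LinearMap.range (g ^ N)) < n := by
      have := Submodule.finrank_add_eq_of_isCompl hN
      have := Submodule.one_le_finrank_iff.mpr hK_ne
      omega
    exact .of_isCompl hN hK hR (isSymmetrizable_restrict_ker_pow_sub_smul_one hK)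
      (ih _ hlt _ rfl)

end Module.End

namespace LinearMap.BilinForm

variable {k V : Type*} [Field k] [AddCommGroup V] [Module k V]

theorem IsSymm.exists_isUnit_toMatrix₂_eq_transpose_mul_self [IsAlgClosed k] [Invertible (2 : k)]
    [FiniteDimensional k V] {B : LinearMap.BilinForm k V} (hB : B.IsSymm) (hBn : B.Nondegenerate)
    {ι : Type*} [Fintype ι] [DecidableEq ι] (c : Basis ι k V) :
    ∃ P : Matrix ι ι k, IsUnit P ∧ LinearMap.toMatrix₂ c c B = Pᵀ * P := by
  obtain ⟨b, hb⟩ := exists_orthogonal_basis (isSymm_iff.mp hB)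
  have hbb : ∀ i, B (b i) (b i) ≠ 0 := hb.not_isOrtho_basis_self_of_separatingLeft hBn.1
  choose r hr using fun i ↦ IsAlgClosed.exists_eq_mul_self (B (b i) (b i))
  have hr0 : ∀ i, r i ≠ 0 := fun i h ↦ hbb i (by rw [hr i, h, mul_zero])
  let b' := (b.unitsSMul fun i ↦ (Units.mk0 (r i) (hr0 i))⁻¹).reindex (b.indexEquiv c)
  have hb' : LinearMap.toMatrix₂ b' b' B = 1 := by
    ext i j
    simp only [b', LinearMap.toMatrix₂_apply, Basis.reindex_apply, Basis.unitsSMul_apply]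
    rcases eq_or_ne i j with rfl | hij
    · simp only [Units.smul_def, map_smul, LinearMap.smul_apply, smul_eq_mul, hr,
        Units.val_inv_eq_inv_val, Units.val_mk0, Matrix.one_apply_eq]
      field_simp [hr0]
    · simp [Units.smul_def, hij, hb ((b.indexEquiv c).symm.injective.ne hij)]
  refine ⟨b'.toMatrix c, @isUnit_of_invertible _ _ _ (b'.invertibleToMatrix c), ?_⟩
  rw [← LinearMap.toMatrix₂_mul_basis_toMatrix b' b', hb', Matrix.mul_one]

end LinearMap.BilinForm

/-- Every square matrix over an algebraically closed field of characteristic 0 is conjugate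
(similar) to a symmetric matrix. -/
theorem isConj_symmetric_matrix
    {k : Type*} [Field k] [IsAlgClosed k] [CharZero k] (n : ℕ)
    (s : Matrix (Fin n) (Fin n) k) :
    ∃ g : (Matrix (Fin n) (Fin n) k)ˣ,
      ((g : Matrix (Fin n) (Fin n) k) * s * (↑g⁻¹ : Matrix (Fin n) (Fin n) k)).IsSymm := by
  have : Invertible (2 : k) := invertibleOfNonzero two_ne_zero
  obtain ⟨B, hB, hBn, hBf⟩ := Module.End.isSymmetrizable (toLin' s)
  obtain ⟨P, hP, hBP⟩ :=
    hB.exists_isUnit_toMatrix₂_eq_transpose_mul_self hBn (Pi.basisFun k (Fin n))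
  have hs : (Pᵀ * 1 * P).IsAdjointPair (Pᵀ * 1 * P) s s := by
    rw [Matrix.mul_one, ← hBP, LinearMap.toMatrix₂_basisFun, ← isAdjointPair_toLinearMap₂',
      Matrix.toLinearMap₂'_toMatrix']
    exact hBf
  rw [Matrix.isAdjointPair_equiv _ _ _ _ hP] at hs
  refine ⟨hP.unit, ?_⟩
  simpa [Matrix.IsAdjointPair, Matrix.IsSymm, Matrix.coe_units_inv] using hs
end

section
/- Let s be an n×n matrix over an algebraically closed field of characteristic 0 with n distinct eigenvalues. Define K(s) = {g ∈ GL_n : there exists an invertible 2×2 matrix (a b; c d) such that c·s + d·I is invertible and g s g⁻¹ = (a·s + b·I)(c·s + d·I)⁻¹}. Then K(s) is contained in the normalizer of the centralizer Z(s) of s. -/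
/-- The centralizer `Z(s) = {g ∈ GL_n : g s = s g}` of a matrix `s`, as a subgroup of `GL_n`. -/
def matrixCentralizer {K : Type*} [Field K] {n : ℕ}
    (s : Matrix (Fin n) (Fin n) K) : Subgroup (Matrix (Fin n) (Fin n) K)ˣ where
  carrier := {g | (g : Matrix (Fin n) (Fin n) K) * s = s * (g : Matrix (Fin n) (Fin n) K)}
  one_mem' := by simp
  mul_mem' := by
    intro a b ha hb
    simp only [Set.mem_setOf_eq, Units.val_mul] at *
    rw [mul_assoc, hb, ← mul_assoc, ha, mul_assoc]
  inv_mem' := by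
    intro a ha
    simp only [Set.mem_setOf_eq] at *
    calc (↑a⁻¹ : Matrix (Fin n) (Fin n) K) * s
        = ↑a⁻¹ * s * (↑a * ↑a⁻¹) := by rw [Units.mul_inv, mul_one]
      _ = ↑a⁻¹ * (s * ↑a) * ↑a⁻¹ := by simp only [mul_assoc]
      _ = ↑a⁻¹ * (↑a * s) * ↑a⁻¹ := by rw [ha]
      _ = s * ↑a⁻¹ := by rw [← mul_assoc, Units.inv_mul, one_mul]

/-!
Write `t = g s g⁻¹ = (a s + b)(c s + d)⁻¹`. As a rational function of `s`, `t` commutes with `s`,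
so it is diagonal in an eigenbasis of `s`; being conjugate to `s`, it has the same characteristic
polynomial and hence again distinct eigenvalues. Thus `s` and `t` both have as commutant exactly the
matrices that are diagonal in that basis, i.e. `Z(s) = Z(t) = g Z(s) g⁻¹`.
-/

open Matrix Polynomial Function

theorem Units.commute_conj_iff {M : Type*} [Monoid M] (u : Mˣ) {a b : M} :
    Commute (↑u * a * ↑u⁻¹) (↑u * b * ↑u⁻¹) ↔ Commute a b := by
  simp only [commute_iff_eq, mul_assoc, Units.inv_mul_cancel_left, Units.mul_right_inj]
  simp only [← mul_assoc, Units.mul_left_inj]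

theorem Commute.of_mul_isUnit_eq {M : Type*} [Monoid M] {s t u v : M} (hu : IsUnit u)
    (hus : Commute u s) (hvs : Commute v s) (h : t * u = v) : Commute t s := by
  obtain ⟨U, rfl⟩ := hu
  obtain rfl : t = v * ↑U⁻¹ := by rw [← h, Units.mul_inv_cancel_right]
  exact hvs.mul_left hus.units_inv_left

namespace Matrix

variable {R n : Type*} [CommRing R] [Fintype n] [DecidableEq n]

theorem commute_diagonal_iff_isDiag [NoZeroDivisors R] {d : n → R} (hd : Injective d)
    {M : Matrix n n R} : Commute M (diagonal d) ↔ M.IsDiag := by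
  refine ⟨fun h i j hij => ?_, fun h => ?_⟩
  · have hij' := congrFun (congrFun h i) j
    rw [mul_diagonal, diagonal_mul] at hij'
    have : M i j * (d j - d i) = 0 := by linear_combination hij'
    exact (mul_eq_zero.mp this).resolve_right (sub_ne_zero.mpr (hd.ne (Ne.symm hij)))
  · rw [← (isDiag_iff_diagonal_diag M).mp h]
    exact commute_diagonal _ _

variable [IsDomain R]

theorem roots_charpoly_diagonal (d : n → R) :
    (diagonal d).charpoly.roots = Finset.univ.val.map d := by
  rw [charpoly_diagonal, Finset.prod_eq_multiset_prod,
    ← roots_multiset_prod_X_sub_C (Finset.univ.val.map d), Multiset.map_map]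
  rfl

theorem nodup_roots_charpoly_diagonal_iff {d : n → R} :
    (diagonal d).charpoly.roots.Nodup ↔ Injective d := by
  rw [roots_charpoly_diagonal, Fintype.nodup_map_univ_iff_injective]

variable {s t : Matrix n n R} {d : n → R}

theorem isDiag_units_conj_of_commute (P : (Matrix n n R)ˣ) (hd : Injective d)
    (hs : (↑P⁻¹ : Matrix n n R) * s * (P : Matrix n n R) = diagonal d) (hts : Commute t s) :
    ((↑P⁻¹ : Matrix n n R) * t * (P : Matrix n n R)).IsDiag := by
  rw [← commute_diagonal_iff_isDiag hd, ← hs]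
  simpa only [inv_inv] using (Units.commute_conj_iff P⁻¹).mpr hts

theorem commute_iff_commute_of_commute_of_charpoly_eq (P : (Matrix n n R)ˣ) (hd : Injective d)
    (hs : (↑P⁻¹ : Matrix n n R) * s * (P : Matrix n n R) = diagonal d) (hts : Commute t s)
    (hchar : t.charpoly = s.charpoly) (X : Matrix n n R) : Commute X t ↔ Commute X s := by
  set e := ((↑P⁻¹ : Matrix n n R) * t * (P : Matrix n n R)).diag
  have hPt : (↑P⁻¹ : Matrix n n R) * t * (P : Matrix n n R) = diagonal e :=
    ((isDiag_iff_diagonal_diag _).mp (isDiag_units_conj_of_commute P hd hs hts)).symm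
  have he : Injective e := by
    rw [← nodup_roots_charpoly_diagonal_iff, ← hPt, coe_units_inv, charpoly_units_conj', hchar,
      ← charpoly_units_conj' P, ← coe_units_inv, hs, nodup_roots_charpoly_diagonal_iff]
    exact hd
  rw [← Units.commute_conj_iff P⁻¹, ← Units.commute_conj_iff P⁻¹ (a := X) (b := s), inv_inv,
    hPt, hs, commute_diagonal_iff_isDiag he, commute_diagonal_iff_isDiag hd]

end Matrix

theorem Ks_subset_normalizer_centralizer_general
    {K : Type*} [Field K] {n : ℕ}
    (s : Matrix (Fin n) (Fin n) K)
    (hreg : ∃ (P : (Matrix (Fin n) (Fin n) K)ˣ) (d : Fin n → K),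
      Function.Injective d ∧
      (↑P⁻¹ : Matrix (Fin n) (Fin n) K) * s * (P : Matrix (Fin n) (Fin n) K)
        = Matrix.diagonal d)
    (g : (Matrix (Fin n) (Fin n) K)ˣ)
    (hg : ∃ a b c d : K, a * d - b * c ≠ 0 ∧
      IsUnit (c • s + d • (1 : Matrix (Fin n) (Fin n) K)) ∧
      (↑g : Matrix (Fin n) (Fin n) K) * s * (↑g⁻¹ : Matrix (Fin n) (Fin n) K)
          * (c • s + d • 1)
        = a • s + b • 1) :
    g ∈ Subgroup.normalizer (matrixCentralizer s : Set (Matrix (Fin n) (Fin n) K)ˣ) := by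
  obtain ⟨P, e, he, hPs⟩ := hreg
  obtain ⟨a, b, c, d, -, hu, hgs⟩ := hg
  set t : Matrix (Fin n) (Fin n) K :=
    (g : Matrix (Fin n) (Fin n) K) * s * (↑g⁻¹ : Matrix (Fin n) (Fin n) K) with ht
  have haffine (x y : K) : Commute (x • s + y • 1) s :=
    ((Commute.refl s).smul_left x).add_left ((Commute.one_left s).smul_left y)
  have hts : Commute t s := .of_mul_isUnit_eq hu (haffine c d) (haffine a b) hgs
  have hchar : t.charpoly = s.charpoly := by rw [ht, coe_units_inv, charpoly_units_conj]
  intro h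
  change Commute (h : Matrix (Fin n) (Fin n) K) s ↔
    Commute ((g : Matrix (Fin n) (Fin n) K) * h * (↑g⁻¹ : Matrix (Fin n) (Fin n) K)) s
  exact (Units.commute_conj_iff g).symm.trans
    (commute_iff_commute_of_commute_of_charpoly_eq P he hPs hts hchar _)

/-- Let `s` be an `n × n` matrix over an algebraically closed field of characteristic 0 with
`n` distinct eigenvalues.  If `g ∈ GL_n` satisfies `g s g⁻¹ = (a•s + b•1)(c•s + d•1)⁻¹` for some
invertible 2×2 matrix `(a b; c d)` with `c•s + d•1` invertible, then `g` lies in the normalizer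
of the centralizer `Z(s)` of `s`. -/
theorem Ks_subset_normalizer_centralizer
    {K : Type*} [Field K] [IsAlgClosed K] [CharZero K] {n : ℕ}
    (s : Matrix (Fin n) (Fin n) K)
    (hreg : ∃ (P : (Matrix (Fin n) (Fin n) K)ˣ) (d : Fin n → K),
      Function.Injective d ∧
      (↑P⁻¹ : Matrix (Fin n) (Fin n) K) * s * (P : Matrix (Fin n) (Fin n) K)
        = Matrix.diagonal d)
    (g : (Matrix (Fin n) (Fin n) K)ˣ)
    (hg : ∃ a b c d : K, a * d - b * c ≠ 0 ∧
      IsUnit (c • s + d • (1 : Matrix (Fin n) (Fin n) K)) ∧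
      (↑g : Matrix (Fin n) (Fin n) K) * s * (↑g⁻¹ : Matrix (Fin n) (Fin n) K)
          * (c • s + d • 1)
        = a • s + b • 1) :
    g ∈ Subgroup.normalizer (matrixCentralizer s : Set (Matrix (Fin n) (Fin n) K)ˣ) :=
  Ks_subset_normalizer_centralizer_general s hreg g hg
end

section
/- Let Φ be an irreducible root system with set of simple roots Δ, highest root θ, and ρ the half-sum of positive roots. If α is a root such that α + ρ is regular (i.e., ⟨α+ρ, β^∨⟩ ≠ 0 for all roots β), then α is one of: the highest root θ, the highest short root θ⁺, the root θ^{++} = s_k(θ⁺ + α_k) (when there are two root lengths), or the negative −α_i of a simple root. -/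
/-!
For a simple root `δ` and a root `τ` with `⟪τ, δ⟫ > 0` put `τ' = s_δ τ + δ`. Since
`s_δ ρ = ρ - δ`, we have `s_δ (ρ - τ) = ρ - τ'`, so regularity of `ρ - τ` passes to `ρ - τ'`.
Regularity also rules out `⟨τ, δ^∨⟩ = 1`, which forces `⟨τ, δ^∨⟩ ∈ {2, 3}` and `⟨δ, τ^∨⟩ = 1`:
`τ` is longer than `δ`, and `τ'` is a root of the same length as `δ`.

For `α = -γ` negative this lowers `γ` to a positive root `γ'` of smaller height, which is simple
by induction; but then `s_δ γ = γ' - δ` would be a root, a difference of two simple roots.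
So `γ` is simple.

For `α` positive and not dominant it raises `α` to the root `μ = s_δ α - δ`, with `μ + ρ` regular
and `|α|² ∈ {2, 3} |μ|²`. By induction on the height of `θ - α`, `μ` is `θ`, `θ⁺` (written
`θs`) or `θ⁺⁺`. The cases `θ` and `θ⁺⁺` would make `α` longer than `θ` (as `|θ|² ≤ 3 |θ⁺|²`), and `μ = θ⁺`
gives `α = s_δ (θ⁺ + δ)`. The induction starts at the dominant roots, which are exactly `θ` and
`θ⁺`: any two dominant roots have positive inner product, so dominant roots of equal length
coincide and at most two lengths occur.
-/

open RealInnerProductSpace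

/-- The reflection `s_α` in the hyperplane orthogonal to `α`. -/
noncomputable def sref {V : Type*} [NormedAddCommGroup V] [InnerProductSpace ℝ V]
    [FiniteDimensional ℝ V] (α : V) : V ≃ₗᵢ[ℝ] V :=
  Submodule.reflection ((ℝ ∙ α)ᗮ)

/-- The pairing `⟨lam, α^∨⟩ = 2⟪lam, α⟫/⟪α, α⟫` of a weight `lam` with the coroot of `α`. -/
noncomputable def cpair {V : Type*} [NormedAddCommGroup V] [InnerProductSpace ℝ V]
    (α lam : V) : ℝ := 2 * ⟪lam, α⟫ / ⟪α, α⟫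

section RootSystem

variable {V : Type*} [NormedAddCommGroup V] [InnerProductSpace ℝ V]

theorem cpair_mul_inner_self {α : V} (hα : α ≠ 0) (x : V) :
    cpair α x * ⟪α, α⟫ = 2 * ⟪x, α⟫ := by
  have : ⟪α, α⟫ ≠ 0 := inner_self_ne_zero.2 hα
  rw [cpair]; field_simp

theorem cpair_eq_of_two_inner_eq {α x : V} {c : ℝ} (hα : α ≠ 0) (h : 2 * ⟪x, α⟫ = c * ⟪α, α⟫) :
    cpair α x = c := by
  rw [cpair, h, mul_div_cancel_right₀ _ (inner_self_ne_zero.2 hα)]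

theorem cpair_pos_iff {α : V} (hα : α ≠ 0) (x : V) : 0 < cpair α x ↔ 0 < ⟪x, α⟫ := by
  rw [cpair, div_pos_iff_of_pos_right (real_inner_self_pos.2 hα)]
  constructor <;> intro h <;> linarith

theorem cpair_self {α : V} (hα : α ≠ 0) : cpair α α = 2 := by
  have : ⟪α, α⟫ ≠ 0 := inner_self_ne_zero.2 hα
  rw [cpair]; field_simp

theorem cpair_neg (α x : V) : cpair α (-x) = -cpair α x := by
  simp [cpair, neg_div]

theorem cpair_sub (α x y : V) : cpair α (x - y) = cpair α x - cpair α y := by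
  simp only [cpair, inner_sub_left, mul_sub, sub_div]

theorem inner_self_eq_cpair_mul {τ β : V} (hτ : τ ≠ 0) (hβ : β ≠ 0) (h : cpair τ β = 1) :
    ⟪τ, τ⟫ = cpair β τ * ⟪β, β⟫ := by
  have := cpair_mul_inner_self hτ β
  rw [h, real_inner_comm τ β] at this
  rw [cpair_mul_inner_self hβ]; linarith

theorem norm_le_norm_of_inner_self_le {x y : V} (h : ⟪x, x⟫ ≤ ⟪y, y⟫) : ‖x‖ ≤ ‖y‖ := by
  rwa [real_inner_self_eq_norm_sq, real_inner_self_eq_norm_sq,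
    sq_le_sq₀ (norm_nonneg _) (norm_nonneg _)] at h

section Height

variable {Δ : Finset V} {F : V →ₗ[ℝ] ℝ} {x : V}

theorem exists_height (hΔ : LinearIndependent ℝ (Subtype.val : Δ → V)) :
    ∃ F : V →ₗ[ℝ] ℝ, ∀ δ ∈ Δ, F δ = 1 := by
  classical
  have hs : LinearIndepOn ℝ id (Δ : Set V) := hΔ
  let b := Module.Basis.extend hs
  refine ⟨b.constr ℝ fun _ => 1, fun δ hδ => ?_⟩
  simpa [b] using b.constr_basis ℝ (fun _ => (1 : ℝ)) ⟨δ, Module.Basis.subset_extend hs hδ⟩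

theorem eq_zero_or_mem_or_two_le_height (hF : ∀ δ ∈ Δ, F δ = 1)
    (hx : x ∈ AddSubmonoid.closure (Δ : Set V)) : x = 0 ∨ x ∈ Δ ∨ 2 ≤ F x := by
  induction hx using AddSubmonoid.closure_induction with
  | mem x hx => exact Or.inr (Or.inl hx)
  | zero => exact Or.inl rfl
  | add x y _ _ ihx ihy =>
    have one_le {z : V} (hz : z ∈ Δ ∨ 2 ≤ F z) : 1 ≤ F z := by
      rcases hz with hz | hz
      · exact (hF z hz).ge
      · linarith
    rcases ihx with rfl | hx
    · simpa using ihy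
    rcases ihy with rfl | hy
    · simpa using Or.inr hx
    exact Or.inr (Or.inr (by rw [map_add]; linarith [one_le hx, one_le hy]))

theorem one_le_height (hF : ∀ δ ∈ Δ, F δ = 1) (hx : x ∈ AddSubmonoid.closure (Δ : Set V))
    (h0 : x ≠ 0) : 1 ≤ F x := by
  rcases eq_zero_or_mem_or_two_le_height hF hx with h | h | h
  · exact absurd h h0
  · exact (hF x h).ge
  · linarith

theorem height_nonneg (hF : ∀ δ ∈ Δ, F δ = 1) (hx : x ∈ AddSubmonoid.closure (Δ : Set V)) :
    0 ≤ F x := by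
  rcases eq_or_ne x 0 with rfl | h0
  · simp
  · linarith [one_le_height hF hx h0]

theorem add_intCast_smul_mem_closure {δ : V} (hδ : δ ∈ Δ) {k : ℤ} (hk : 0 ≤ k)
    (hx : x ∈ AddSubmonoid.closure (Δ : Set V)) :
    x + (k : ℝ) • δ ∈ AddSubmonoid.closure (Δ : Set V) := by
  lift k to ℕ using hk
  rw [Int.cast_natCast, Nat.cast_smul_eq_nsmul]
  exact add_mem hx (nsmul_mem (AddSubmonoid.subset_closure hδ) k)

def IsDominant (Δ : Finset V) (σ : V) : Prop := ∀ δ ∈ Δ, 0 ≤ ⟪σ, δ⟫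

theorem IsDominant.inner_nonneg {σ : V} (hσ : IsDominant Δ σ)
    (hx : x ∈ AddSubmonoid.closure (Δ : Set V)) : 0 ≤ ⟪σ, x⟫ := by
  induction hx using AddSubmonoid.closure_induction with
  | mem x hx => exact hσ x hx
  | zero => simp
  | add x y _ _ hx hy => rw [inner_add_right]; linarith

theorem exists_inner_pos_of_mem_closure (hx : x ∈ AddSubmonoid.closure (Δ : Set V))
    (h0 : x ≠ 0) : ∃ δ ∈ Δ, 0 < ⟪x, δ⟫ := by
  by_contra! h
  have := IsDominant.inner_nonneg (σ := -x) (fun δ hδ => by simpa [inner_neg_left] using h δ hδ) hx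
  rw [inner_neg_left, neg_nonneg] at this
  exact h0 (real_inner_self_nonpos.1 this)

end Height

structure IsBase (Φ Δ : Finset V) : Prop where
  subset : (Δ : Set V) ⊆ Φ
  linearIndependent : LinearIndependent ℝ (Subtype.val : Δ → V)
  mem_or_neg_mem : ∀ β ∈ Φ,
    β ∈ AddSubmonoid.closure (Δ : Set V) ∨ -β ∈ AddSubmonoid.closure (Δ : Set V)

namespace IsBase

variable {Φ Δ : Finset V} (hB : IsBase Φ Δ) {x y σ β : V}
include hB

theorem sub_notMem {δ δ' : V} (hδ : δ ∈ Δ) (hδ' : δ' ∈ Δ) (hne : δ ≠ δ') : δ - δ' ∉ Φ := by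
  intro hmem
  obtain ⟨F, hF⟩ := exists_height hB.linearIndependent
  have hF0 : F (δ - δ') = 0 := by rw [map_sub, hF δ hδ, hF δ' hδ', sub_self]
  rcases hB.mem_or_neg_mem _ hmem with h | h
  · linarith [one_le_height hF h (sub_ne_zero.2 hne)]
  · have := one_le_height hF h (neg_ne_zero.2 (sub_ne_zero.2 hne))
    rw [map_neg, hF0] at this
    linarith

theorem sub_notMem_of_isDominant (hσ : IsDominant Δ σ) (hβ : IsDominant Δ β)
    (h₁ : ⟪σ, β⟫ < ⟪σ, σ⟫) (h₂ : ⟪σ, β⟫ < ⟪β, β⟫) : σ - β ∉ Φ := by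
  intro hmem
  rcases hB.mem_or_neg_mem _ hmem with h | h
  · have := hβ.inner_nonneg h
    rw [inner_sub_right, real_inner_comm] at this
    linarith
  · have := hσ.inner_nonneg h
    rw [neg_sub, inner_sub_right] at this
    linarith

theorem eq_of_sub_mem_closure (h₁ : x - y ∈ AddSubmonoid.closure (Δ : Set V))
    (h₂ : y - x ∈ AddSubmonoid.closure (Δ : Set V)) : x = y := by
  obtain ⟨F, hF⟩ := exists_height hB.linearIndependent
  by_contra hne
  have h₁ := one_le_height hF h₁ (sub_ne_zero.2 hne)
  have h₂ := one_le_height hF h₂ (sub_ne_zero.2 (Ne.symm hne))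
  rw [map_sub] at h₁ h₂
  linarith

end IsBase

structure IsHighestRoot (Φ Δ : Finset V) (θ : V) : Prop where
  mem : θ ∈ Φ
  sub_mem_closure : ∀ β ∈ Φ, θ - β ∈ AddSubmonoid.closure (Δ : Set V)

theorem IsHighestRoot.inner_self_le_inner {Φ Δ : Finset V} {θ σ : V} (hθ : IsHighestRoot Φ Δ θ)
    (hσ : σ ∈ Φ) (hd : IsDominant Δ σ) : ⟪σ, σ⟫ ≤ ⟪θ, σ⟫ := by
  have := hd.inner_nonneg (hθ.sub_mem_closure σ hσ)
  rw [inner_sub_right, real_inner_comm] at this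
  linarith

structure IsHighestShortRoot (Φ Δ : Finset V) (θs : V) : Prop where
  mem : θs ∈ Φ
  inner_self_le : ∀ β ∈ Φ, ⟪θs, θs⟫ ≤ ⟪β, β⟫
  sub_mem_closure : ∀ β ∈ Φ, ⟪β, β⟫ = ⟪θs, θs⟫ → θs - β ∈ AddSubmonoid.closure (Δ : Set V)

variable [FiniteDimensional ℝ V]

section Reflection

theorem sref_apply (α x : V) : sref α x = x - cpair α x • α := by
  rcases eq_or_ne α 0 with rfl | hα
  · simp [sref, cpair, Submodule.reflection_apply,
      Submodule.starProjection_eq_self_iff.2 (Submodule.mem_top (R := ℝ) (x := x)), two_smul]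
  have hα2 : ‖α‖ ^ 2 ≠ 0 := by positivity
  rw [sref, Submodule.reflection_apply, Submodule.starProjection_orthogonal_val,
    Submodule.starProjection_singleton, cpair, real_inner_self_eq_norm_sq, real_inner_comm]
  simp only [RCLike.ofReal_real_eq_id, id]
  match_scalars <;> field_simp; ring

theorem sref_sref (α x : V) : sref α (sref α x) = x :=
  Submodule.reflection_reflection _ x

theorem inner_sref_left (α x y : V) : ⟪sref α x, y⟫ = ⟪x, sref α y⟫ := by
  rw [← (sref α).inner_map_map x (sref α y), sref_sref]

theorem inner_sref_self (α x : V) : ⟪sref α x, sref α x⟫ = ⟪x, x⟫ :=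
  (sref α).inner_map_map x x

theorem sref_self (α : V) : sref α α = -α :=
  Submodule.reflection_orthogonalComplement_singleton_eq_neg α

theorem cpair_sref (α β x : V) : cpair β (sref α x) = cpair (sref α β) x := by
  rw [cpair, cpair, inner_sref_left, inner_sref_self]

theorem inner_self_sref_add {τ δ : V} (h : cpair τ δ = 1) :
    ⟪sref δ τ + δ, sref δ τ + δ⟫ = ⟪δ, δ⟫ := by
  have hτ : τ ≠ 0 := by rintro rfl; simp [cpair] at h
  have h₁ : ⟪sref δ τ, δ⟫ = -⟪τ, δ⟫ := by rw [inner_sref_left, sref_self, inner_neg_right]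
  have h₂ := cpair_mul_inner_self hτ δ
  rw [h, one_mul, real_inner_comm τ δ] at h₂
  rw [inner_add_left, inner_add_right, inner_add_right, inner_sref_self,
    real_inner_comm (sref δ τ) δ, h₁]
  linarith

end Reflection

structure IsReducedRootSystem (Φ : Finset V) : Prop where
  zero_notMem : (0 : V) ∉ Φ
  sref_mem : ∀ α ∈ Φ, ∀ β ∈ Φ, sref α β ∈ Φ
  cpair_int : ∀ α ∈ Φ, ∀ β ∈ Φ, ∃ z : ℤ, cpair α β = z
  eq_one_or_neg_one_of_smul_mem : ∀ α ∈ Φ, ∀ t : ℝ, t • α ∈ Φ → t = 1 ∨ t = -1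

def IsRegularWeight (Φ : Finset V) (w : V) : Prop := ∀ β ∈ Φ, cpair β w ≠ 0

namespace IsReducedRootSystem

variable {Φ : Finset V} (hΦ : IsReducedRootSystem Φ) {τ β δ σ γ ρ : V}
include hΦ

theorem ne_zero (hβ : β ∈ Φ) : β ≠ 0 := fun h => hΦ.zero_notMem (h ▸ hβ)

theorem inner_self_pos (hβ : β ∈ Φ) : 0 < ⟪β, β⟫ := real_inner_self_pos.2 (hΦ.ne_zero hβ)

theorem neg_mem (hβ : β ∈ Φ) : -β ∈ Φ := by
  have := hΦ.sref_mem β hβ β hβ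
  rwa [sref_apply, cpair_self (hΦ.ne_zero hβ), two_smul, sub_add_cancel_left] at this

theorem inner_mul_inner_lt (hτ : τ ∈ Φ) (hβ : β ∈ Φ) (h₁ : τ ≠ β) (h₂ : τ ≠ -β) :
    ⟪τ, β⟫ * ⟪τ, β⟫ < ⟪τ, τ⟫ * ⟪β, β⟫ := by
  have hlt : |⟪τ, β⟫| < ‖τ‖ * ‖β‖ := by
    refine (abs_real_inner_le_norm τ β).lt_of_ne fun heq => ?_
    obtain ⟨r, -, hr⟩ := (norm_inner_eq_norm_iff (𝕜 := ℝ) (hΦ.ne_zero hβ) (hΦ.ne_zero hτ)).1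
      (by rw [Real.norm_eq_abs, real_inner_comm, heq, mul_comm])
    rcases hΦ.eq_one_or_neg_one_of_smul_mem β hβ r (hr ▸ hτ) with rfl | rfl
    · exact h₁ (by simpa using hr)
    · exact h₂ (by simpa using hr)
  rw [real_inner_self_eq_norm_sq, real_inner_self_eq_norm_sq, ← abs_mul_abs_self]
  nlinarith [abs_nonneg ⟪τ, β⟫]

theorem cpair_mul_cpair_lt_four (hτ : τ ∈ Φ) (hβ : β ∈ Φ) (h₁ : τ ≠ β) (h₂ : τ ≠ -β) :
    cpair β τ * cpair τ β < 4 := by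
  have := hΦ.inner_mul_inner_lt hτ hβ h₁ h₂
  have := hΦ.inner_self_pos hτ
  have := hΦ.inner_self_pos hβ
  rw [cpair, cpair, real_inner_comm τ β, div_mul_div_comm, div_lt_iff₀ (by positivity)]
  nlinarith

theorem exists_cartan_integers (hτ : τ ∈ Φ) (hβ : β ∈ Φ) (hne : τ ≠ β) (hpos : 0 < ⟪τ, β⟫) :
    ∃ m n : ℤ, cpair β τ = m ∧ cpair τ β = n ∧ 0 < m ∧ 0 < n ∧ m * n < 4 := by
  obtain ⟨m, hm⟩ := hΦ.cpair_int β hβ τ hτ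
  obtain ⟨n, hn⟩ := hΦ.cpair_int τ hτ β hβ
  have hlt := hΦ.cpair_mul_cpair_lt_four hτ hβ hne
    (by rintro rfl; simp only [inner_neg_left] at hpos; linarith [hΦ.inner_self_pos hβ])
  have hm0 := (cpair_pos_iff (hΦ.ne_zero hβ) τ).2 hpos
  have hn0 := (cpair_pos_iff (hΦ.ne_zero hτ) β).2 (real_inner_comm β τ ▸ hpos)
  rw [hm, hn] at hlt
  rw [hm] at hm0
  rw [hn] at hn0
  exact ⟨m, n, hm, hn, by exact_mod_cast hm0, by exact_mod_cast hn0, by exact_mod_cast hlt⟩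

theorem sub_mem_of_inner_pos (hτ : τ ∈ Φ) (hβ : β ∈ Φ) (hne : τ ≠ β) (hpos : 0 < ⟪τ, β⟫) :
    τ - β ∈ Φ := by
  obtain ⟨m, n, hm, hn, hm0, hn0, hmn⟩ := hΦ.exists_cartan_integers hτ hβ hne hpos
  have : m = 1 ∨ n = 1 := by
    by_contra! h
    nlinarith [(by omega : 2 ≤ m), (by omega : 2 ≤ n)]
  rcases this with rfl | rfl
  · simpa [sref_apply, hm] using hΦ.sref_mem β hβ τ hτ
  · simpa [sref_apply, hn] using hΦ.neg_mem (hΦ.sref_mem τ hτ β hβ)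

theorem add_mem_of_inner_neg (hτ : τ ∈ Φ) (hβ : β ∈ Φ) (hne : τ ≠ -β) (hneg : ⟪τ, β⟫ < 0) :
    τ + β ∈ Φ := by
  simpa using hΦ.sub_mem_of_inner_pos hτ (hΦ.neg_mem hβ) hne (by simpa [inner_neg_right])

theorem one_lt_cpair (hτ : τ ∈ Φ) (hβ : β ∈ Φ) (hpos : 0 < ⟪τ, β⟫) (h : cpair β τ ≠ 1) :
    1 < cpair β τ := by
  obtain ⟨m, hm⟩ := hΦ.cpair_int β hβ τ hτ
  have hm0 := (cpair_pos_iff (hΦ.ne_zero hβ) τ).2 hpos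
  rw [hm] at hm0 h ⊢
  have : 0 < m := by exact_mod_cast hm0
  have : m ≠ 1 := by exact_mod_cast h
  exact_mod_cast (by omega : 1 < m)

theorem cpair_eq_one_of_one_lt (hτ : τ ∈ Φ) (hβ : β ∈ Φ) (hne : τ ≠ β) (h : 1 < cpair β τ) :
    cpair τ β = 1 ∧ (cpair β τ = 2 ∨ cpair β τ = 3) := by
  obtain ⟨m, n, hm, hn, -, hn0, hmn⟩ := hΦ.exists_cartan_integers hτ hβ hne
    ((cpair_pos_iff (hΦ.ne_zero hβ) τ).1 (by linarith))
  rw [hm] at h ⊢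
  have : 1 < m := by exact_mod_cast h
  obtain rfl : n = 1 := by nlinarith
  exact ⟨by simp [hn], by norm_cast; omega⟩

theorem inner_self_eq_two_or_three_mul (hτ : τ ∈ Φ) (hβ : β ∈ Φ) (hpos : 0 < ⟪τ, β⟫)
    (hlt : ⟪β, β⟫ < ⟪τ, τ⟫) : ⟪τ, τ⟫ = 2 * ⟪β, β⟫ ∨ ⟪τ, τ⟫ = 3 * ⟪β, β⟫ := by
  have hne : τ ≠ β := by rintro rfl; exact lt_irrefl _ hlt
  have hβτ : cpair β τ ≠ 1 := by
    intro h
    have hββ := inner_self_eq_cpair_mul (hΦ.ne_zero hβ) (hΦ.ne_zero hτ) h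
    obtain ⟨m, n, -, hn, -, hn0, -⟩ := hΦ.exists_cartan_integers hτ hβ hne hpos
    rw [hn] at hββ
    have : (n : ℝ) < 1 := by nlinarith [hΦ.inner_self_pos hτ]
    have : n < 1 := by exact_mod_cast this
    omega
  obtain ⟨h₁, h₂⟩ := hΦ.cpair_eq_one_of_one_lt hτ hβ hne (hΦ.one_lt_cpair hτ hβ hpos hβτ)
  rw [inner_self_eq_cpair_mul (hΦ.ne_zero hτ) (hΦ.ne_zero hβ) h₁]
  rcases h₂ with h | h <;> simp [h]

theorem two_mul_inner_self_le_of_add_mem (hσ : σ ∈ Φ) (hγ : γ ∈ Φ) (hσγ : σ + γ ∈ Φ)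
    (h : 0 ≤ ⟪σ, γ⟫) : 2 * ⟪γ, γ⟫ ≤ ⟪σ + γ, σ + γ⟫ := by
  have hγ0 := hΦ.inner_self_pos hγ
  have hne : σ + γ ≠ γ := fun heq => hΦ.ne_zero hσ (by simpa using heq)
  have hc := cpair_mul_inner_self (hΦ.ne_zero hγ) (σ + γ)
  rw [inner_add_left] at hc
  obtain ⟨h₁, h₂⟩ := hΦ.cpair_eq_one_of_one_lt hσγ hγ hne (by nlinarith)
  rw [inner_self_eq_cpair_mul (hΦ.ne_zero hσγ) (hΦ.ne_zero hγ) h₁]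
  exact mul_le_mul_of_nonneg_right (by rcases h₂ with h₂ | h₂ <;> linarith) hγ0.le

theorem sref_add_mem (hτ : τ ∈ Φ) (hδ : δ ∈ Φ) (hne : τ ≠ δ) (hpos : 0 < ⟪τ, δ⟫) :
    sref δ τ + δ ∈ Φ := by
  refine hΦ.add_mem_of_inner_neg (hΦ.sref_mem δ hδ τ hτ) hδ (fun h => hne ?_) ?_
  · rw [← sref_sref δ τ, h, map_neg, sref_self, neg_neg]
  · rw [inner_sref_left, sref_self, inner_neg_right]; linarith

theorem isRegularWeight_sub_sref_add (hδ : δ ∈ Φ) (hρ : cpair δ ρ = 1)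
    (hreg : IsRegularWeight Φ (ρ - τ)) : IsRegularWeight Φ (ρ - (sref δ τ + δ)) := by
  have : ρ - (sref δ τ + δ) = sref δ (ρ - τ) := by
    rw [map_sub, sref_apply δ ρ, hρ, one_smul]; abel
  intro β hβ
  rw [this, cpair_sref]
  exact hreg _ (hΦ.sref_mem δ hδ β hβ)

theorem cpair_eq_two_or_three_of_isRegularWeight (hτ : τ ∈ Φ) (hδ : δ ∈ Φ) (hne : τ ≠ δ)
    (hpos : 0 < ⟪τ, δ⟫) (hρ : cpair δ ρ = 1) (hreg : IsRegularWeight Φ (ρ - τ)) :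
    cpair τ δ = 1 ∧ (cpair δ τ = 2 ∨ cpair δ τ = 3) :=
  hΦ.cpair_eq_one_of_one_lt hτ hδ hne <| hΦ.one_lt_cpair hτ hδ hpos fun h =>
    hreg δ hδ (by rw [cpair_sub, hρ, h, sub_self])

end IsReducedRootSystem

namespace IsBase

variable {Φ Δ : Finset V} (hΦ : IsReducedRootSystem Φ) (hB : IsBase Φ Δ) {F : V →ₗ[ℝ] ℝ}
  {α β σ τ γ ρ : V}
include hΦ hB

theorem mem_closure_of_neg_one_lt_height (hF : ∀ δ ∈ Δ, F δ = 1) (hβ : β ∈ Φ) (h : -1 < F β) :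
    β ∈ AddSubmonoid.closure (Δ : Set V) := by
  refine (hB.mem_or_neg_mem β hβ).resolve_right fun hneg => ?_
  have := one_le_height hF hneg (neg_ne_zero.2 (hΦ.ne_zero hβ))
  rw [map_neg] at this
  linarith

theorem mem_closure_of_isDominant (hσ : σ ∈ Φ) (hd : IsDominant Δ σ) :
    σ ∈ AddSubmonoid.closure (Δ : Set V) := by
  refine (hB.mem_or_neg_mem σ hσ).resolve_right fun hneg => ?_
  have := hd.inner_nonneg hneg
  rw [inner_neg_right] at this
  linarith [hΦ.inner_self_pos hσ]

theorem exists_isDominant (hτ : τ ∈ Φ) :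
    ∃ σ ∈ Φ, IsDominant Δ σ ∧ ⟪σ, σ⟫ = ⟪τ, τ⟫ ∧ σ - τ ∈ AddSubmonoid.closure (Δ : Set V) := by
  classical
  obtain ⟨F, hF⟩ := exists_height hB.linearIndependent
  let S := Φ.filter fun σ => ⟪σ, σ⟫ = ⟪τ, τ⟫ ∧ σ - τ ∈ AddSubmonoid.closure (Δ : Set V)
  -- a highest root of `S` is dominant: reflecting it in a simple root that pairs negatively
  -- with it would stay in `S` and go higher
  obtain ⟨σ, hσS, hmax⟩ := S.exists_max_image F ⟨τ, by simp [S, hτ]⟩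
  obtain ⟨hσ, hσσ, hστ⟩ := by simpa only [S, Finset.mem_filter] using hσS
  refine ⟨σ, hσ, fun δ hδ => ?_, hσσ, hστ⟩
  by_contra! hneg
  have hδ0 := hΦ.ne_zero (hB.subset hδ)
  obtain ⟨m, hm⟩ := hΦ.cpair_int δ (hB.subset hδ) σ hσ
  have hm0 : m < 0 := by
    have : cpair δ σ < 0 := by
      rw [cpair]; exact div_neg_of_neg_of_pos (by linarith) (real_inner_self_pos.2 hδ0)
    exact_mod_cast hm ▸ this
  have hsref : sref δ σ = σ + ((-m : ℤ) : ℝ) • δ := by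
    rw [sref_apply, hm]; push_cast; rw [neg_smul, sub_eq_add_neg]
  have hmem : sref δ σ ∈ S := by
    simp only [S, Finset.mem_filter, inner_sref_self, hσσ, true_and]
    refine ⟨hΦ.sref_mem δ (hB.subset hδ) σ hσ, ?_⟩
    rw [hsref, add_sub_right_comm]
    exact add_intCast_smul_mem_closure (k := -m) hδ (by omega) hστ
  have := hmax _ hmem
  rw [hsref, map_add, map_smul, hF δ hδ, smul_eq_mul, mul_one] at this
  have : (1 : ℝ) ≤ ((-m : ℤ) : ℝ) := by exact_mod_cast (by omega : (1 : ℤ) ≤ -m)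
  linarith

theorem mem_of_isRegularWeight_sub (hρ : ∀ δ ∈ Δ, cpair δ ρ = 1) (hγ : γ ∈ Φ)
    (hγP : γ ∈ AddSubmonoid.closure (Δ : Set V)) (hreg : IsRegularWeight Φ (ρ - γ)) : γ ∈ Δ := by
  obtain ⟨F, hF⟩ := exists_height hB.linearIndependent
  suffices ∀ n : ℕ, ∀ γ ∈ Φ, γ ∈ AddSubmonoid.closure (Δ : Set V) → F γ ≤ n →
      IsRegularWeight Φ (ρ - γ) → γ ∈ Δ from this _ γ hγ hγP (Nat.le_ceil _) hreg
  intro n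
  induction n with
  | zero =>
    intro γ hγ hγP hFγ _
    push_cast at hFγ
    linarith [one_le_height hF hγP (hΦ.ne_zero hγ)]
  | succ n ih =>
    intro γ hγ hγP hFγ hreg
    by_contra hγΔ
    obtain ⟨δ, hδ, hpos⟩ := exists_inner_pos_of_mem_closure hγP (hΦ.ne_zero hγ)
    have hδΦ := hB.subset hδ
    have hne : γ ≠ δ := by rintro rfl; exact hγΔ hδ
    obtain ⟨-, hp⟩ :=
      hΦ.cpair_eq_two_or_three_of_isRegularWeight hγ hδΦ hne hpos (hρ δ hδ) hreg
    have hF' : F (sref δ γ + δ) = F γ - cpair δ γ + 1 := by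
      rw [sref_apply, map_add, map_sub, map_smul, hF δ hδ, smul_eq_mul, mul_one]
    have h2 : 2 ≤ F γ := by
      rcases eq_zero_or_mem_or_two_le_height hF hγP with h | h | h
      exacts [absurd h (hΦ.ne_zero hγ), absurd h hγΔ, h]
    have hmem := hΦ.sref_add_mem hγ hδΦ hne hpos
    have hΔ' : sref δ γ + δ ∈ Δ := by
      refine ih _ hmem (hB.mem_closure_of_neg_one_lt_height hΦ hF hmem ?_) ?_
        (hΦ.isRegularWeight_sub_sref_add hδΦ (hρ δ hδ) hreg)
      · rcases hp with hp | hp <;> rw [hF', hp] <;> linarith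
      · push_cast at hFγ; rcases hp with hp | hp <;> rw [hF', hp] <;> linarith
    refine hB.sub_notMem hΔ' hδ (fun h => hΦ.ne_zero hγ ?_) ?_
    · simpa using h
    · simpa using hΦ.sref_mem δ hδΦ γ hγ

theorem exists_higher_root_of_not_isDominant (hρ : ∀ δ ∈ Δ, cpair δ ρ = 1) (hα : α ∈ Φ)
    (hαP : α ∈ AddSubmonoid.closure (Δ : Set V)) (hd : ¬IsDominant Δ α)
    (hreg : IsRegularWeight Φ (α + ρ)) :
    ∃ δ ∈ Δ, ∃ μ ∈ Φ, μ - α ∈ AddSubmonoid.closure (Δ : Set V) ∧ sref δ α = μ + δ ∧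
      (⟪α, α⟫ = 2 * ⟪μ, μ⟫ ∨ ⟪α, α⟫ = 3 * ⟪μ, μ⟫) ∧ IsRegularWeight Φ (μ + ρ) := by
  obtain ⟨δ, hδ, hneg⟩ : ∃ δ ∈ Δ, ⟪α, δ⟫ < 0 := by simpa [IsDominant] using hd
  have hδΦ := hB.subset hδ
  have hδP : δ ∈ AddSubmonoid.closure (Δ : Set V) := AddSubmonoid.subset_closure hδ
  have hα' := hΦ.neg_mem hα
  have hpos : 0 < ⟪-α, δ⟫ := by rw [inner_neg_left]; linarith
  have hne : -α ≠ δ := fun h => hΦ.ne_zero hδΦ <|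
    hB.eq_of_sub_mem_closure (by simpa using hδP) (by simpa [← h] using hαP)
  have hreg' : IsRegularWeight Φ (ρ - -α) := by rwa [sub_neg_eq_add, add_comm]
  obtain ⟨h₁, hp⟩ :=
    hΦ.cpair_eq_two_or_three_of_isRegularWeight hα' hδΦ hne hpos (hρ δ hδ) hreg'
  have hc : cpair δ α = -cpair δ (-α) := by rw [cpair_neg, neg_neg]
  have hμ : sref δ α - δ = -(sref δ (-α) + δ) := by rw [map_neg]; abel
  have hαα := inner_self_eq_cpair_mul (hΦ.ne_zero hα') (hΦ.ne_zero hδΦ) h₁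
  rw [inner_neg_neg] at hαα
  refine ⟨δ, hδ, sref δ α - δ, hμ ▸ hΦ.neg_mem (hΦ.sref_add_mem hα' hδΦ hne hpos), ?_,
    (sub_add_cancel _ _).symm, ?_, ?_⟩
  · rcases hp with hp | hp
    · convert hδP using 1; rw [sref_apply, hc, hp]; module
    · convert add_mem hδP hδP using 1; rw [sref_apply, hc, hp]; module
  · rw [hμ, inner_neg_neg, inner_self_sref_add h₁, hαα]
    rcases hp with hp | hp <;> simp [hp]
  · rw [hμ, neg_add_eq_sub]
    exact hΦ.isRegularWeight_sub_sref_add hδΦ (hρ δ hδ) hreg'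

end IsBase

theorem IsHighestShortRoot.isDominant {Φ Δ : Finset V} {θs : V} (hΦ : IsReducedRootSystem Φ)
    (hB : IsBase Φ Δ) (hθs : IsHighestShortRoot Φ Δ θs) : IsDominant Δ θs := by
  obtain ⟨σ, hσ, hd, hσσ, hσP⟩ := hB.exists_isDominant hΦ hθs.mem
  rwa [← hB.eq_of_sub_mem_closure hσP (hθs.sub_mem_closure σ hσ hσσ)]

namespace IsHighestRoot

variable {Φ Δ : Finset V} {θ σ σ' : V} (hΦ : IsReducedRootSystem Φ) (hB : IsBase Φ Δ)
  (hθ : IsHighestRoot Φ Δ θ)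
include hΦ hB hθ

theorem isDominant : IsDominant Δ θ := by
  obtain ⟨F, hF⟩ := exists_height hB.linearIndependent
  intro δ hδ
  by_contra! hneg
  have hδΦ := hB.subset hδ
  have hne : θ ≠ -δ := by
    rintro rfl
    have := height_nonneg hF (hθ.sub_mem_closure δ hδΦ)
    rw [map_sub, map_neg, hF δ hδ] at this
    linarith
  have := height_nonneg hF (hθ.sub_mem_closure _ (hΦ.add_mem_of_inner_neg hθ.mem hδΦ hne hneg))
  rw [sub_add_cancel_left, map_neg, hF δ hδ] at this
  linarith

theorem inner_self_le {β : V} (hβ : β ∈ Φ) : ⟪β, β⟫ ≤ ⟪θ, θ⟫ := by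
  obtain ⟨σ, hσ, hd, hσσ, -⟩ := hB.exists_isDominant hΦ hβ
  have h₁ := hθ.inner_self_le_inner hσ hd
  have h₂ := (hθ.isDominant hΦ hB).inner_nonneg (hθ.sub_mem_closure σ hσ)
  rw [inner_sub_right] at h₂
  linarith

omit hB in
theorem two_inner_eq_inner_self_of_isDominant (hσ : σ ∈ Φ) (hd : IsDominant Δ σ) (hne : σ ≠ θ) :
    2 * ⟪θ, σ⟫ = ⟪θ, θ⟫ ∧ 2 * ⟪σ, σ⟫ ≤ ⟪θ, θ⟫ := by
  have hc := cpair_mul_inner_self (hΦ.ne_zero hσ) θ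
  have := hθ.inner_self_le_inner hσ hd
  obtain ⟨h₁, h₂⟩ := hΦ.cpair_eq_one_of_one_lt hθ.mem hσ hne.symm
    (by nlinarith [hΦ.inner_self_pos hσ])
  have h₃ := cpair_mul_inner_self (hΦ.ne_zero hθ.mem) σ
  have h₄ := inner_self_eq_cpair_mul (hΦ.ne_zero hθ.mem) (hΦ.ne_zero hσ) h₁
  rw [h₁, one_mul] at h₃
  rcases h₂ with h₂ | h₂ <;> rw [h₂] at h₄ <;> constructor <;>
    linarith [hΦ.inner_self_pos hσ, real_inner_comm σ θ]

theorem inner_pos_of_isDominant (hσ : σ ∈ Φ) (hσ' : σ' ∈ Φ) (hd : IsDominant Δ σ)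
    (hd' : IsDominant Δ σ') : 0 < ⟪σ, σ'⟫ := by
  refine (hd.inner_nonneg (hB.mem_closure_of_isDominant hΦ hσ' hd')).lt_of_ne' fun h0 => ?_
  have hσσ := hΦ.inner_self_pos hσ
  have hσσ' := hΦ.inner_self_pos hσ'
  have hσθ : σ ≠ θ := by
    rintro rfl; linarith [hθ.inner_self_le_inner hσ' hd']
  have hσ'θ : σ' ≠ θ := by
    rintro rfl; linarith [hθ.inner_self_le_inner hσ hd, real_inner_comm σ σ']
  obtain ⟨h₁, h₂⟩ := hθ.two_inner_eq_inner_self_of_isDominant hΦ hσ hd hσθ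
  obtain ⟨h₁', h₂'⟩ := hθ.two_inner_eq_inner_self_of_isDominant hΦ hσ' hd' hσ'θ
  have hη : θ - σ ∈ Φ := hΦ.sub_mem_of_inner_pos hθ.mem hσ hσθ.symm (by linarith)
  have hησ' : 0 < ⟪θ - σ, σ'⟫ := by rw [inner_sub_left]; linarith
  by_cases hcase : θ - σ = σ'
  · -- here `θ = σ + σ'`, and reflecting `θ` in `σ'` gives the root `σ - σ'`
    have hθeq : θ = σ + σ' := by rw [← hcase]; abel
    have hc : cpair σ' θ = 2 := cpair_eq_of_two_inner_eq (hΦ.ne_zero hσ')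
      (by rw [hθeq, inner_add_left, h0]; ring)
    have := hΦ.sref_mem σ' hσ' θ hθ.mem
    rw [sref_apply, hc, hθeq] at this
    exact hB.sub_notMem_of_isDominant hd hd' (by linarith) (by linarith)
      (by convert this using 1; module)
  · -- otherwise `θ - σ - σ'` is a root of squared length `|σ|² + |σ'|² - |θ|² ≤ 0`
    have hζ := hΦ.inner_self_pos (hΦ.sub_mem_of_inner_pos hη hσ' hcase hησ')
    simp only [inner_sub_left, inner_sub_right] at hζ
    linarith [real_inner_comm σ θ, real_inner_comm σ' θ, real_inner_comm σ σ']

theorem eq_of_isDominant (hσ : σ ∈ Φ) (hσ' : σ' ∈ Φ) (hd : IsDominant Δ σ)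
    (hd' : IsDominant Δ σ') (hlen : ⟪σ, σ⟫ = ⟪σ', σ'⟫) : σ = σ' := by
  by_contra hne
  have hpos := hθ.inner_pos_of_isDominant hΦ hB hσ hσ' hd hd'
  have hσσ' := hΦ.inner_self_pos hσ'
  have hc : cpair σ' σ = 1 := by
    by_contra h
    obtain ⟨h₁, h₂⟩ := hΦ.cpair_eq_one_of_one_lt hσ hσ' hne (hΦ.one_lt_cpair hσ hσ' hpos h)
    have := inner_self_eq_cpair_mul (hΦ.ne_zero hσ) (hΦ.ne_zero hσ') h₁
    rcases h₂ with h₂ | h₂ <;> rw [h₂] at this <;> linarith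
  have := cpair_mul_inner_self (hΦ.ne_zero hσ') σ
  rw [hc, one_mul] at this
  exact hB.sub_notMem_of_isDominant hd hd' (by linarith) (by linarith)
    (hΦ.sub_mem_of_inner_pos hσ hσ' hne hpos)

theorem exists_isHighestShortRoot : ∃ θs, IsHighestShortRoot Φ Δ θs := by
  obtain ⟨τ, hτ, hmin⟩ := Φ.exists_min_image (fun β => ⟪β, β⟫) ⟨θ, hθ.mem⟩
  obtain ⟨σ, hσ, hd, hσσ, -⟩ := hB.exists_isDominant hΦ hτ
  refine ⟨σ, hσ, fun β hβ => hσσ ▸ hmin β hβ, fun β hβ hββ => ?_⟩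
  obtain ⟨σ', hσ', hd', hσσ', hσ'β⟩ := hB.exists_isDominant hΦ hβ
  rwa [hθ.eq_of_isDominant hΦ hB hσ hσ' hd hd' (by rw [hσσ', hββ])]

variable {θs : V} (hθs : IsHighestShortRoot Φ Δ θs)
include hθs

theorem eq_or_eq_of_isDominant (hσ : σ ∈ Φ) (hd : IsDominant Δ σ) : σ = θ ∨ σ = θs := by
  have hdθ := hθ.isDominant hΦ hB
  have hdθs := hθs.isDominant hΦ hB
  rcases (hθ.inner_self_le hΦ hB hσ).eq_or_lt with h₁ | h₁
  · exact Or.inl (hθ.eq_of_isDominant hΦ hB hσ hθ.mem hd hdθ h₁)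
  rcases (hθs.inner_self_le σ hσ).eq_or_lt with h₂ | h₂
  · exact Or.inr (hθ.eq_of_isDominant hΦ hB hσ hθs.mem hd hdθs h₂.symm)
  -- three root lengths, with pairwise ratios `2` or `3`, are impossible
  have r₁ := hΦ.inner_self_eq_two_or_three_mul hθ.mem hσ
    (hθ.inner_pos_of_isDominant hΦ hB hθ.mem hσ hdθ hd) h₁
  have r₂ := hΦ.inner_self_eq_two_or_three_mul hσ hθs.mem
    (hθ.inner_pos_of_isDominant hΦ hB hσ hθs.mem hd hdθs) h₂
  have r₃ := hΦ.inner_self_eq_two_or_three_mul hθ.mem hθs.mem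
    (hθ.inner_pos_of_isDominant hΦ hB hθ.mem hθs.mem hdθ hdθs) (h₂.trans h₁)
  have := hΦ.inner_self_pos hθs.mem
  rcases r₁ with r₁ | r₁ <;> rcases r₂ with r₂ | r₂ <;> rcases r₃ with r₃ | r₃ <;> linarith

theorem inner_self_le_three_mul : ⟪θ, θ⟫ ≤ 3 * ⟪θs, θs⟫ := by
  have := hΦ.inner_self_pos hθs.mem
  rcases (hθs.inner_self_le θ hθ.mem).eq_or_lt with h | h
  · linarith
  rcases hΦ.inner_self_eq_two_or_three_mul hθ.mem hθs.mem (hθ.inner_pos_of_isDominant hΦ hB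
    hθ.mem hθs.mem (hθ.isDominant hΦ hB) (hθs.isDominant hΦ hB)) h with h' | h' <;> linarith

theorem eq_of_isRegularWeight_add {ρ α : V} (hρ : ∀ δ ∈ Δ, cpair δ ρ = 1) (hα : α ∈ Φ)
    (hαP : α ∈ AddSubmonoid.closure (Δ : Set V)) (hreg : IsRegularWeight Φ (α + ρ)) :
    α = θ ∨ α = θs ∨ ∃ γ ∈ Δ, θs + γ ∈ Φ ∧ α = sref γ (θs + γ) := by
  obtain ⟨F, hF⟩ := exists_height hB.linearIndependent
  suffices ∀ n : ℕ, ∀ α ∈ Φ, α ∈ AddSubmonoid.closure (Δ : Set V) → F θ - F α < n →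
      IsRegularWeight Φ (α + ρ) → α = θ ∨ α = θs ∨ ∃ γ ∈ Δ, θs + γ ∈ Φ ∧ α = sref γ (θs + γ) from
    this _ α hα hαP (by exact_mod_cast Nat.lt_floor_add_one _) hreg
  intro n
  induction n with
  | zero =>
    intro α hα _ hlt _
    have := height_nonneg hF (hθ.sub_mem_closure α hα)
    rw [map_sub] at this
    push_cast at hlt
    linarith
  | succ n ih =>
    intro α hα hαP hlt hreg
    by_cases hd : IsDominant Δ α
    · exact (hθ.eq_or_eq_of_isDominant hΦ hB hθs hα hd).imp_right Or.inl
    obtain ⟨δ, hδ, μ, hμΦ, hμα, hsα, hlen, hμreg⟩ :=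
      hB.exists_higher_root_of_not_isDominant hΦ hρ hα hαP hd hreg
    have hμμ := hΦ.inner_self_pos hμΦ
    have hαμ : μ - α ≠ 0 := sub_ne_zero.2 fun h => by subst h; rcases hlen with h | h <;> linarith
    have hFμ := one_le_height hF hμα hαμ
    rw [map_sub] at hFμ
    rcases ih μ hμΦ (by simpa using add_mem hαP hμα) (by push_cast at hlt; linarith) hμreg
      with rfl | rfl | ⟨γ, hγ, hγΦ, rfl⟩
    · have := hθ.inner_self_le hΦ hB hα
      rcases hlen with h | h <;> linarith
    · refine Or.inr (Or.inr ⟨δ, hδ, hsα ▸ hΦ.sref_mem δ (hB.subset hδ) α hα, ?_⟩)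
      rw [← hsα, sref_sref]
    · -- `|α|² ≥ 2 |θs + γ|² ≥ 4 |γ|² ≥ 4 |θs|² > |θ|²`
      have hγΦ' := hB.subset hγ
      have h₂ := hΦ.two_mul_inner_self_le_of_add_mem hθs.mem hγΦ' hγΦ
        (hθs.isDominant hΦ hB γ hγ)
      rw [← inner_sref_self γ (θs + γ)] at h₂
      have := hθs.inner_self_le γ hγΦ'
      have := hθ.inner_self_le hΦ hB hα
      have := hθ.inner_self_le_three_mul hΦ hB hθs
      rcases hlen with h | h <;> linarith [hΦ.inner_self_pos hθs.mem]

end IsHighestRoot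

end RootSystem

theorem regular_weight_root_plus_rho_general
    {V : Type*} [NormedAddCommGroup V] [InnerProductSpace ℝ V] [FiniteDimensional ℝ V]
    (Φ Δ : Finset V)
    -- root system axioms
    (h0 : (0 : V) ∉ Φ)
    (hrefl : ∀ α ∈ Φ, ∀ β ∈ Φ, sref α β ∈ Φ)
    (hint : ∀ α ∈ Φ, ∀ β ∈ Φ, ∃ z : ℤ, cpair α β = z)
    (hred : ∀ α ∈ Φ, ∀ t : ℝ, t • α ∈ Φ → t = 1 ∨ t = -1)
    -- Δ is a system of simple roots: every root is a nonnegative integral combination of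
    -- simple roots, or the negative of one
    (hΔΦ : (Δ : Set V) ⊆ Φ)
    (hΔind : LinearIndependent ℝ (Subtype.val : {x : V // x ∈ Δ} → V))
    (hΔgen : ∀ β ∈ Φ, β ∈ AddSubmonoid.closure (Δ : Set V)
      ∨ -β ∈ AddSubmonoid.closure (Δ : Set V))
    -- ρ, the half-sum of the positive roots
    (ρ : V) (hρ : ∀ α ∈ Δ, cpair α ρ = 1)
    -- θ, the highest root (its existence forces Φ to be irreducible)
    (θ : V) (hθΦ : θ ∈ Φ)
    (hθmax : ∀ β ∈ Φ, θ - β ∈ AddSubmonoid.closure (Δ : Set V))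
    -- α is a root such that α + ρ is regular
    (α : V) (hα : α ∈ Φ)
    (hreg : ∀ β ∈ Φ, cpair β (α + ρ) ≠ 0) :
    α = θ ∨ (∃ γ ∈ Δ, α = -γ) ∨
    (∃ θp ∈ Φ, (∀ β ∈ Φ, ‖θp‖ ≤ ‖β‖) ∧
      (∀ β ∈ Φ, ‖β‖ = ‖θp‖ → θp - β ∈ AddSubmonoid.closure (Δ : Set V)) ∧
      (α = θp ∨ ∃ γ ∈ Δ, θp + γ ∈ Φ ∧ α = sref γ (θp + γ))) := by
  have hΦ : IsReducedRootSystem Φ := ⟨h0, hrefl, hint, hred⟩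
  have hB : IsBase Φ Δ := ⟨hΔΦ, hΔind, hΔgen⟩
  have hθ : IsHighestRoot Φ Δ θ := ⟨hθΦ, hθmax⟩
  obtain ⟨θs, hθs⟩ := hθ.exists_isHighestShortRoot hΦ hB
  rcases hΔgen α hα with hαP | hαN
  · have hshort : ∀ β ∈ Φ, ‖θs‖ ≤ ‖β‖ := fun β hβ =>
      norm_le_norm_of_inner_self_le (hθs.inner_self_le β hβ)
    have hmax : ∀ β ∈ Φ, ‖β‖ = ‖θs‖ → θs - β ∈ AddSubmonoid.closure (Δ : Set V) :=
      fun β hβ h => hθs.sub_mem_closure β hβ (by simp only [real_inner_self_eq_norm_sq, h])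
    rcases hθ.eq_of_isRegularWeight_add hΦ hB hθs hρ hα hαP hreg with h | h | h
    · exact Or.inl h
    · exact Or.inr (Or.inr ⟨θs, hθs.mem, hshort, hmax, Or.inl h⟩)
    · exact Or.inr (Or.inr ⟨θs, hθs.mem, hshort, hmax, Or.inr h⟩)
  · refine Or.inr (Or.inl ⟨-α, hB.mem_of_isRegularWeight_sub hΦ hρ (hΦ.neg_mem hα) hαN ?_,
      (neg_neg α).symm⟩)
    rwa [sub_neg_eq_add, add_comm]

/-- Let `Φ` be an irreducible root system with simple roots `Δ`, highest root `θ` and `ρ` the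
half-sum of positive roots (characterized by `⟨ρ, α^∨⟩ = 1` for all simple `α`).  If `α ∈ Φ`
is such that `α + ρ` is regular, then `α` is the highest root `θ`, the negative of a simple
root, the highest short root `θ⁺`, or the root `θ^{++} = s_k(θ⁺ + α_k)` where `α_k` is the
unique simple root such that `θ⁺ + α_k` is a root. -/
theorem regular_weight_root_plus_rho
    {V : Type*} [NormedAddCommGroup V] [InnerProductSpace ℝ V] [FiniteDimensional ℝ V]
    (Φ Δ : Finset V)
    -- root system axioms
    (h0 : (0 : V) ∉ Φ)
    (hspan : Submodule.span ℝ (Φ : Set V) = ⊤)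
    (hrefl : ∀ α ∈ Φ, ∀ β ∈ Φ, sref α β ∈ Φ)
    (hint : ∀ α ∈ Φ, ∀ β ∈ Φ, ∃ z : ℤ, cpair α β = z)
    (hred : ∀ α ∈ Φ, ∀ t : ℝ, t • α ∈ Φ → t = 1 ∨ t = -1)
    -- Δ is a system of simple roots: every root is a nonnegative integral combination of
    -- simple roots, or the negative of one
    (hΔΦ : (Δ : Set V) ⊆ Φ)
    (hΔind : LinearIndependent ℝ (Subtype.val : {x : V // x ∈ Δ} → V))
    (hΔgen : ∀ β ∈ Φ, β ∈ AddSubmonoid.closure (Δ : Set V)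
      ∨ -β ∈ AddSubmonoid.closure (Δ : Set V))
    -- ρ, the half-sum of the positive roots
    (ρ : V) (hρ : ∀ α ∈ Δ, cpair α ρ = 1)
    -- θ, the highest root (its existence forces Φ to be irreducible)
    (θ : V) (hθΦ : θ ∈ Φ)
    (hθmax : ∀ β ∈ Φ, θ - β ∈ AddSubmonoid.closure (Δ : Set V))
    -- α is a root such that α + ρ is regular
    (α : V) (hα : α ∈ Φ)
    (hreg : ∀ β ∈ Φ, cpair β (α + ρ) ≠ 0) :
    α = θ ∨ (∃ γ ∈ Δ, α = -γ) ∨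
    (∃ θp ∈ Φ, (∀ β ∈ Φ, ‖θp‖ ≤ ‖β‖) ∧
      (∀ β ∈ Φ, ‖β‖ = ‖θp‖ → θp - β ∈ AddSubmonoid.closure (Δ : Set V)) ∧
      (α = θp ∨ ∃ γ ∈ Δ, θp + γ ∈ Φ ∧ α = sref γ (θp + γ))) :=
  regular_weight_root_plus_rho_general Φ Δ h0 hrefl hint hred hΔΦ hΔind hΔgen ρ hρ θ hθΦ hθmax α hα
    hreg
end
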